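/- Let M be an operator on H_1 ⊗ H_0 and N an operator on H_2 ⊗ H_1. Then N * M = SWAP_{H_0,H_2} (M * N) SWAP_{H_0,H_2}, where M * N = Tr_{H_1}[(I_{H_0} ⊗ N^{T_1})(M ⊗ I_{H_2})] is an operator on H_0 ⊗ H_2 and SWAP_{H_0,H_2} is the unitary that exchanges the tensor factors H_0 and H_2. -/

import Mathlib

open Matrix
open scoped ComplexOrder

noncomputable section

namespace QLink

/-- Kronecker (tensor) product of two square matrices, on the product index set. -/
def kron {α β : Type} (A : Matrix α α ℂ) (B : Matrix β β ℂ) :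
    Matrix (α × β) (α × β) ℂ := fun p q => A p.1 q.1 * B p.2 q.2

/-- Partial transpose on the first tensor factor. -/
def ptransposeFst {α β : Type} (M : Matrix (α × β) (α × β) ℂ) : Matrix (α × β) (α × β) ℂ :=
  fun p q => M (q.1, p.2) (p.1, q.2)

/-- Partial transpose on the second tensor factor. -/
def ptransposeSnd {α β : Type} (M : Matrix (α × β) (α × β) ℂ) : Matrix (α × β) (α × β) ℂ :=
  fun p q => M (p.1, q.2) (q.1, p.2)

/-- Partial trace over the middle tensor factor. -/
def ptraceMid {α β γ : Type} [Fintype β] (X : Matrix (α × β × γ) (α × β × γ) ℂ) :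
    Matrix (α × γ) (α × γ) ℂ :=
  fun p q => ∑ b : β, X (p.1, b, p.2) (q.1, b, q.2)

/-- Partial trace over the first tensor factor. -/
def ptraceFst {α β : Type} [Fintype α] (X : Matrix (α × β) (α × β) ℂ) : Matrix β β ℂ :=
  fun p q => ∑ a : α, X (a, p) (a, q)

/-- The link product `N * M = Tr_{H₁}[(I_{H₂} ⊗ M^{T₁})(N ⊗ I_{H₀})]`, an operator on
`H₂ ⊗ H₀`, for `M` on `H₁ ⊗ H₀` and `N` on `H₂ ⊗ H₁`. -/
def linkNM {α0 α1 α2 : Type} [Fintype α0] [Fintype α1] [Fintype α2]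
    [DecidableEq α0] [DecidableEq α1] [DecidableEq α2]
    (Nm : Matrix (α2 × α1) (α2 × α1) ℂ) (M : Matrix (α1 × α0) (α1 × α0) ℂ) :
    Matrix (α2 × α0) (α2 × α0) ℂ :=
  ptraceMid ((kron (1 : Matrix α2 α2 ℂ) (ptransposeFst M)) *
    (Matrix.reindex (Equiv.prodAssoc α2 α1 α0) (Equiv.prodAssoc α2 α1 α0)
      (kron Nm (1 : Matrix α0 α0 ℂ))))

/-- The cyclic reordering `H₁ ⊗ H₀ ⊗ H₂ ≃ H₀ ⊗ H₂ ⊗ H₁`. -/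
def cyc (α1 α0 α2 : Type) : α1 × α0 × α2 ≃ α0 × α2 × α1 where
  toFun p := (p.2.1, p.2.2, p.1)
  invFun p := (p.2.2, p.1, p.2.1)
  left_inv p := rfl
  right_inv p := rfl

/-- The link product `M * N = Tr_{H₁}[(I_{H₀} ⊗ N^{T₁})(M ⊗ I_{H₂})]`, an operator on
`H₀ ⊗ H₂`, for `M` on `H₁ ⊗ H₀` and `N` on `H₂ ⊗ H₁` (here `N^{T₁}` is the partial
transpose of `N` on its `H₁` factor). -/
def linkMN {α0 α1 α2 : Type} [Fintype α0] [Fintype α1] [Fintype α2]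
    [DecidableEq α0] [DecidableEq α1] [DecidableEq α2]
    (M : Matrix (α1 × α0) (α1 × α0) ℂ) (Nm : Matrix (α2 × α1) (α2 × α1) ℂ) :
    Matrix (α0 × α2) (α0 × α2) ℂ :=
  ptraceFst ((Matrix.reindex (cyc α1 α0 α2).symm (cyc α1 α0 α2).symm
      (kron (1 : Matrix α0 α0 ℂ) (ptransposeSnd Nm))) *
    (Matrix.reindex (Equiv.prodAssoc α1 α0 α2) (Equiv.prodAssoc α1 α0 α2)
      (kron M (1 : Matrix α2 α2 ℂ))))

/-- `𝓜 ⊗ id_{L(K)}` applied to an operator on `H₀ ⊗ K`. -/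
def mapTensorId {α0 α1 : Type} (f : Matrix α0 α0 ℂ →ₗ[ℂ] Matrix α1 α1 ℂ) (K : Type)
    (X : Matrix (α0 × K) (α0 × K) ℂ) : Matrix (α1 × K) (α1 × K) ℂ :=
  fun p q => f (fun x y => X (x, p.2) (y, q.2)) p.1 q.1

/-- The unnormalized maximally entangled vector `|Ψ⟩ = Σ_i |i⟩|i⟩` on `H₀ ⊗ H₀`. -/
def maxEntVec (α0 : Type) [DecidableEq α0] : α0 × α0 → ℂ :=
  fun p => if p.1 = p.2 then 1 else 0

/-- The Choi-Jamiolkowski operator `M = (𝓜 ⊗ id)(|Ψ⟩⟨Ψ|)` of a linear map `𝓜`. -/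
def choi {α0 α1 : Type} [DecidableEq α0]
    (f : Matrix α0 α0 ℂ →ₗ[ℂ] Matrix α1 α1 ℂ) : Matrix (α1 × α0) (α1 × α0) ℂ :=
  mapTensorId f α0 (Matrix.vecMulVec (maxEntVec α0) (star (maxEntVec α0)))

section

variable {α0 α1 α2 : Type} [Fintype α0] [Fintype α1] [Fintype α2]
  [DecidableEq α0] [DecidableEq α1] [DecidableEq α2]

theorem linkNM_apply (Nm : Matrix (α2 × α1) (α2 × α1) ℂ) (M : Matrix (α1 × α0) (α1 × α0) ℂ)
    (c c' : α2) (a a' : α0) :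
    linkNM Nm M (c, a) (c', a') = ∑ b : α1, ∑ b' : α1, Nm (c, b) (c', b') * M (b, a) (b', a') := by
  simp only [linkNM, ptraceMid, ptransposeFst, kron, Matrix.mul_apply, reindex_apply,
    submatrix_apply, Equiv.prodAssoc_symm_apply, Fintype.sum_prod_type, Matrix.one_apply,
    ite_mul, mul_ite, one_mul, mul_one, zero_mul, mul_zero, Finset.sum_ite_eq,
    Finset.sum_ite_eq', Finset.sum_ite_irrel, Finset.sum_const_zero, Finset.mem_univ, if_true]
  rw [Finset.sum_comm]
  simp_rw [mul_comm]

theorem linkMN_apply (M : Matrix (α1 × α0) (α1 × α0) ℂ) (Nm : Matrix (α2 × α1) (α2 × α1) ℂ)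
    (a a' : α0) (c c' : α2) :
    linkMN M Nm (a, c) (a', c') = ∑ b : α1, ∑ b' : α1, Nm (c, b) (c', b') * M (b, a) (b', a') := by
  simp only [linkMN, ptraceFst, ptransposeSnd, kron, cyc, Matrix.mul_apply, reindex_apply,
    submatrix_apply, Equiv.symm_mk, Equiv.coe_fn_mk, Equiv.prodAssoc_symm_apply,
    Fintype.sum_prod_type, Matrix.one_apply, ite_mul, mul_ite, one_mul, mul_one, zero_mul,
    mul_zero, Finset.sum_ite_eq, Finset.sum_ite_eq', Finset.mem_univ, if_true]
  rw [Finset.sum_comm]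

end

/-- `N * M = SWAP_{H₀,H₂} (M * N) SWAP_{H₀,H₂}`: the two link products
agree up to the swap of the tensor factors `H₀` and `H₂`. -/
theorem linkNM_eq_swap_linkMN {α0 α1 α2 : Type} [Fintype α0] [Fintype α1] [Fintype α2]
    [DecidableEq α0] [DecidableEq α1] [DecidableEq α2]
    (M : Matrix (α1 × α0) (α1 × α0) ℂ) (Nm : Matrix (α2 × α1) (α2 × α1) ℂ) :
    linkNM Nm M =
      Matrix.reindex (Equiv.prodComm α0 α2) (Equiv.prodComm α0 α2) (linkMN M Nm) := by
  ext ⟨c, a⟩ ⟨c', a'⟩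
  rw [linkNM_apply, reindex_apply, submatrix_apply, Equiv.prodComm_symm, Equiv.prodComm_apply,
    Equiv.prodComm_apply, Prod.swap_prod_mk, Prod.swap_prod_mk, linkMN_apply]

end QLink
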